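/- arXiv:2601.19200 — 2 statements merged into one kernel-verified Lean document; each statement's English description precedes it below -/
import Mathlib

section
/- Conversely, if τ is a hereditary torsion theory on left A-modules such that every higher Ω-derivation of order n on every A-module preserves the torsion submodule, then the Gabriel filter ℒ corresponding to τ is Ω-invariant of order n: for every I ∈ ℒ there exists K ∈ ℒ with Ω_j(K) ⊆ I for all j = 0,1,…,n. -/
universe u

/-- Annihilator of an element as a left ideal. -/
def annIdeal (A : Type u) [Ring A] {M : Type u} [AddCommGroup M] [Module A M] (m : M) :
    Submodule A A :=
  LinearMap.ker (LinearMap.toSpanSingleton A M m)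

/-!
Let `R` be the ring generated over `A` by `t₁, …, tₙ` subject to `t_k a = ∑_{i+j=k} Ω_i(a) t_j`
(with `t₀ = 1`). For a left ideal `L`, left multiplication by the `t_k` is a higher
`Ω`-derivation of the induced module `R ⊗_A A/L`, and `1 ⊗ 1` has annihilator `L`. If `D` is the
inverse of `∑ Ω_i X^i` in `End(A)⟦X⟧`, then `a t_k = ∑_{j+l=k} t_l D_j(a)`, so `a` kills
`t_k ⊗ 1` iff `D_j(a) ∈ L` for all `j ≤ k`. As `∑_{i+t=j} Ω_i(D_t a) = 0` for `j > 0`, this gives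
`Ω_j(a) ∈ I` for `j ≤ k` once `Ω_i(L) ⊆ I` for `i < k`. Starting from `L = I` and, for
`k = 1, …, n` in turn, replacing `L` by the annihilator of `t_k ⊗ 1` (which lies in `ℒ` by
hypothesis) produces the required `K`.
-/

open Finset PowerSeries

theorem Finset.Nat.sum_antidiagonal_sum_antidiagonal {M : Type*} [AddCommMonoid M]
    (f : ℕ → ℕ → ℕ → M) (k : ℕ) :
    ∑ p ∈ antidiagonal k, ∑ q ∈ antidiagonal p.2, f p.1 q.1 q.2 =
      ∑ p ∈ antidiagonal k, ∑ q ∈ antidiagonal p.1, f q.1 q.2 p.2 := by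
  simp only [Finset.sum_sigma']
  apply Finset.sum_nbij' (fun x => ⟨(x.1.1 + x.2.1, x.2.2), (x.1.1, x.2.1)⟩)
    (fun x => ⟨(x.2.1, x.2.2 + x.1.2), (x.2.2, x.1.2)⟩) <;>
    aesop (add simp [add_assoc])

theorem Finset.Nat.sum_antidiagonal_eq_apply_zero_left {M : Type*} [AddCommMonoid M]
    {f : ℕ × ℕ → M} {k : ℕ} (h : ∀ p ∈ antidiagonal k, p.1 ≠ 0 → f p = 0) :
    ∑ p ∈ antidiagonal k, f p = f (0, k) := by
  refine sum_eq_single (0, k) (fun p hp hne => h p hp fun h0 => hne ?_) (by simp)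
  rw [HasAntidiagonal.mem_antidiagonal] at hp
  ext <;> simp <;> omega

theorem AddMonoid.End.finsetSum_apply {ι M : Type*} [AddCommMonoid M] (s : Finset ι)
    (f : ι → AddMonoid.End M) (x : M) : (∑ i ∈ s, f i) x = ∑ i ∈ s, f i x :=
  AddMonoidHom.finsetSum_apply f s x

theorem AddMonoid.End.sub_apply {M : Type*} [AddCommGroup M] (f g : AddMonoid.End M) (x : M) :
    (f - g) x = f x - g x :=
  rfl

theorem Finsupp.addMonoidEnd_ext {α M : Type*} [AddCommMonoid M] {f g : AddMonoid.End (α →₀ M)}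
    (h : ∀ a x, f (Finsupp.single a x) = g (Finsupp.single a x)) : f = g :=
  Finsupp.addHom_ext h

section InverseFamily

variable {G : Type*} [AddCommGroup G] (Ω : ℕ → AddMonoid.End G)

noncomputable def invFamily (t : ℕ) : AddMonoid.End G :=
  coeff t (invOfUnit (mk Ω) 1)

variable {Ω}

theorem invFamily_zero : invFamily Ω 0 = 1 := by
  simp [invFamily]

theorem sum_antidiagonal_invFamily_apply (h0 : Ω 0 = 1) (m : ℕ) (a : G) :
    ∑ p ∈ antidiagonal m, invFamily Ω p.1 (Ω p.2 a) = if m = 0 then a else 0 := by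
  have h := congrArg (fun φ : PowerSeries (AddMonoid.End G) => coeff m φ a)
    (invOfUnit_mul (mk Ω) 1 (by simp [h0]))
  split_ifs with hm <;> simpa [coeff_mul, AddMonoid.End.finsetSum_apply, invFamily, hm] using h

theorem sum_antidiagonal_apply_invFamily (h0 : Ω 0 = 1) (m : ℕ) (a : G) :
    ∑ p ∈ antidiagonal m, Ω p.1 (invFamily Ω p.2 a) = if m = 0 then a else 0 := by
  have h := congrArg (fun φ : PowerSeries (AddMonoid.End G) => coeff m φ a)
    (mul_invOfUnit (mk Ω) 1 (by simp [h0]))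
  split_ifs with hm <;> simpa [coeff_mul, AddMonoid.End.finsetSum_apply, invFamily, hm] using h

theorem apply_mem_of_invFamily_mem (h0 : Ω 0 = 1) {S : Set G} {I : AddSubgroup G} {r : ℕ}
    (hS : ∀ i ≤ r, ∀ x ∈ S, Ω i x ∈ I) {a : G} (ha : ∀ t ≤ r + 1, invFamily Ω t a ∈ S) :
    ∀ j ≤ r + 1, Ω j a ∈ I := by
  have ha0 : a ∈ S := by simpa [invFamily_zero] using ha 0 (Nat.zero_le _)
  rintro (_ | j) hj
  · exact hS 0 (Nat.zero_le _) a ha0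
  have h := sum_antidiagonal_apply_invFamily h0 (j + 1) a
  rw [if_neg j.succ_ne_zero, Finset.Nat.sum_antidiagonal_succ', invFamily_zero,
    AddMonoid.End.coe_one, id, add_eq_zero_iff_eq_neg] at h
  rw [h]
  refine I.neg_mem (I.sum_mem fun p hp => hS _ ?_ _ (ha _ ?_)) <;>
    rw [HasAntidiagonal.mem_antidiagonal] at hp <;> omega

end InverseFamily

structure HigherDerivation (A : Type*) [Ring A] (n : ℕ) where
  toFun : ℕ → AddMonoid.End A
  toFun_zero : toFun 0 = 1
  toFun_mul : ∀ k ≤ n, ∀ a b : A,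
    toFun k (a * b) = ∑ p ∈ antidiagonal k, toFun p.1 a * toFun p.2 b

namespace HigherDerivation

variable {A : Type*} [Ring A] {n : ℕ}

instance : CoeFun (HigherDerivation A n) (fun _ => ℕ → AddMonoid.End A) := ⟨toFun⟩

variable (Ω : HigherDerivation A n)

theorem map_one_eq_zero {k : ℕ} (hk : 1 ≤ k) (hkn : k ≤ n) : Ω k 1 = 0 := by
  induction k using Nat.strong_induction_on with
  | _ k ih =>
    obtain ⟨k, rfl⟩ : ∃ k', k = k' + 1 := ⟨k - 1, by omega⟩
    have h := Ω.toFun_mul (k + 1) hkn 1 1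
    rw [Finset.Nat.sum_antidiagonal_succ', Finset.Nat.sum_antidiagonal_eq_apply_zero_left] at h
    · change Ω (k + 1) (1 * 1) = Ω (k + 1) 1 * Ω 0 1 + Ω 0 1 * Ω (k + 1) 1 at h
      rw [Ω.toFun_zero] at h
      simpa using h
    · intro p hp hp1
      rw [HasAntidiagonal.mem_antidiagonal] at hp
      dsimp only
      rw [ih p.1 (by omega) (by omega) (by omega), zero_mul]

section Words

variable {V : Type*} [AddCommMonoid V]

noncomputable def consHom (k : ℕ) : AddMonoid.End (List ℕ →₀ V) :=
  Finsupp.mapDomain.addMonoidHom (k :: ·)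

noncomputable def prepend (k : ℕ) : AddMonoid.End (List ℕ →₀ V) :=
  if k = 0 then 1 else consHom k

theorem consHom_single (k : ℕ) (w : List ℕ) (x : V) :
    consHom k (Finsupp.single w x) = Finsupp.single (k :: w) x :=
  Finsupp.mapDomain_single

theorem prepend_zero : (prepend 0 : AddMonoid.End (List ℕ →₀ V)) = 1 := if_pos rfl

theorem prepend_of_ne_zero {k : ℕ} (hk : k ≠ 0) :
    (prepend k : AddMonoid.End (List ℕ →₀ V)) = consHom k := if_neg hk

theorem prepend_single (k : ℕ) (w : List ℕ) (x : V) :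
    prepend k (Finsupp.single w x) = Finsupp.single (if k = 0 then w else k :: w) x := by
  rcases eq_or_ne k 0 with rfl | hk
  · simp [prepend_zero]
  · simp [prepend_of_ne_zero hk, consHom_single, hk]

end Words

def InducedModule (_Ω : HigherDerivation A n) (V : Type*) [AddCommGroup V] : Type _ :=
  List ℕ →₀ V

section

variable {V : Type*} [AddCommGroup V]

noncomputable instance : AddCommGroup (Ω.InducedModule V) :=
  inferInstanceAs (AddCommGroup (List ℕ →₀ V))

def toInducedModule (f : List ℕ →₀ V) : Ω.InducedModule V := f

noncomputable def shift (k : ℕ) (f : Ω.InducedModule V) : Ω.InducedModule V :=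
  Ω.toInducedModule (prepend k f)

theorem toInducedModule_eq_zero {f : List ℕ →₀ V} : Ω.toInducedModule f = 0 ↔ f = 0 :=
  Iff.rfl

theorem shift_add (k : ℕ) (f g : Ω.InducedModule V) :
    Ω.shift k (f + g) = Ω.shift k f + Ω.shift k g :=
  map_add (prepend k) f g

theorem shift_zero (f : Ω.InducedModule V) : Ω.shift 0 f = f := by
  simp [shift, prepend_zero, toInducedModule, id]

end

variable (V : Type*) [AddCommGroup V] [Module A V]

/- `single (k₁ :: ⋯ :: kₘ) x` stands for `t_{k₁} ⋯ t_{kₘ} ⊗ x` in `R ⊗_A V`, and `a` is moved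
past `t_k` by `a t_k = ∑_{j+l=k} t_l D_j(a)` with `D = invFamily Ω`. Letters outside `1, …, n`
commute with `A`. -/
noncomputable def wordSMul : List ℕ → A → V → List ℕ →₀ V
  | [], a, x => Finsupp.single [] (a • x)
  | k :: w, a, x =>
    if 1 ≤ k ∧ k ≤ n then ∑ p ∈ antidiagonal k, prepend p.2 (wordSMul w (invFamily Ω p.1 a) x)
    else consHom k (wordSMul w a x)

theorem wordSMul_add_left (w : List ℕ) (a b : A) (x : V) :
    Ω.wordSMul V w (a + b) x = Ω.wordSMul V w a x + Ω.wordSMul V w b x := by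
  induction w generalizing a b with
  | nil => simp [wordSMul, add_smul]
  | cons k w ih => simp only [wordSMul]; split_ifs <;> simp [ih, sum_add_distrib]

theorem wordSMul_add_right (w : List ℕ) (a : A) (x y : V) :
    Ω.wordSMul V w a (x + y) = Ω.wordSMul V w a x + Ω.wordSMul V w a y := by
  induction w generalizing a with
  | nil => simp [wordSMul]
  | cons k w ih => simp only [wordSMul]; split_ifs <;> simp [ih, sum_add_distrib]

noncomputable def smulHom : A →+ AddMonoid.End (List ℕ →₀ V) :=
  Finsupp.liftAddHom.toAddMonoidHom.comp <| AddMonoidHom.mk'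
    (fun a w => AddMonoidHom.mk' (Ω.wordSMul V w a) (Ω.wordSMul_add_right V w a))
    fun a b => funext fun w => AddMonoidHom.ext (Ω.wordSMul_add_left V w a b)

noncomputable def mulDefect (a b : A) : AddMonoid.End (List ℕ →₀ V) :=
  Ω.smulHom V (a * b) - Ω.smulHom V a * Ω.smulHom V b

variable {Ω V}

theorem smulHom_single (a : A) (w : List ℕ) (x : V) :
    Ω.smulHom V a (Finsupp.single w x) = Ω.wordSMul V w a x :=
  Finsupp.liftAddHom_apply_single _ w x

theorem smulHom_mul_consHom {k : ℕ} (hk : ¬(1 ≤ k ∧ k ≤ n)) (a : A) :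
    Ω.smulHom V a * consHom k = consHom k * Ω.smulHom V a := by
  refine Finsupp.addMonoidEnd_ext fun w x => ?_
  simp [consHom_single, smulHom_single, wordSMul, hk]

theorem smulHom_mul_prepend {m : ℕ} (hm : m ≤ n) (a : A) :
    Ω.smulHom V a * prepend m =
      ∑ p ∈ antidiagonal m, prepend p.2 * Ω.smulHom V (invFamily Ω p.1 a) := by
  rcases Nat.eq_zero_or_pos m with rfl | hm0
  · simp [prepend_zero, invFamily_zero]
  refine Finsupp.addMonoidEnd_ext fun w x => ?_
  simp [prepend_single, hm0.ne', smulHom_single, wordSMul, hm, AddMonoid.End.finsetSum_apply]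

theorem prepend_mul_smulHom {k : ℕ} (hk : k ≤ n) (a : A) :
    prepend k * Ω.smulHom V a = ∑ p ∈ antidiagonal k, Ω.smulHom V (Ω p.1 a) * prepend p.2 := by
  symm
  calc ∑ p ∈ antidiagonal k, Ω.smulHom V (Ω p.1 a) * prepend p.2
      = ∑ p ∈ antidiagonal k, ∑ q ∈ antidiagonal p.2,
          prepend q.2 * Ω.smulHom V (invFamily Ω q.1 (Ω p.1 a)) := by
        refine sum_congr rfl fun p hp => smulHom_mul_prepend ?_ _
        rw [HasAntidiagonal.mem_antidiagonal] at hp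
        omega
    _ = ∑ p ∈ antidiagonal k, ∑ q ∈ antidiagonal p.1,
          prepend p.2 * Ω.smulHom V (invFamily Ω q.2 (Ω q.1 a)) :=
        Finset.Nat.sum_antidiagonal_sum_antidiagonal
          (fun i j m => prepend m * Ω.smulHom V (invFamily Ω j (Ω i a))) k
    _ = ∑ p ∈ antidiagonal k, prepend p.2 * Ω.smulHom V (if p.1 = 0 then a else 0) := by
        refine sum_congr rfl fun p _ => ?_
        rw [← Finset.mul_sum, ← map_sum, ← sum_antidiagonal_invFamily_apply Ω.toFun_zero,
          ← Finset.Nat.sum_antidiagonal_swap]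
        rfl
    _ = prepend k * Ω.smulHom V a := by
        rw [Finset.Nat.sum_antidiagonal_eq_apply_zero_left fun p _ hp => by simp [hp]]
        simp

theorem prepend_mul_mulDefect {k : ℕ} (hk : k ≤ n) (a b : A) :
    prepend k * Ω.mulDefect V a b = ∑ p ∈ antidiagonal k, ∑ q ∈ antidiagonal p.1,
      Ω.mulDefect V (Ω q.1 a) (Ω q.2 b) * prepend p.2 := by
  have hmul : prepend k * Ω.smulHom V (a * b) = ∑ p ∈ antidiagonal k, ∑ q ∈ antidiagonal p.1,
      Ω.smulHom V (Ω q.1 a * Ω q.2 b) * prepend p.2 := by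
    rw [prepend_mul_smulHom hk]
    refine sum_congr rfl fun p hp => ?_
    rw [HasAntidiagonal.mem_antidiagonal] at hp
    rw [Ω.toFun_mul p.1 (by omega), map_sum, Finset.sum_mul]
  have hcomp : prepend k * (Ω.smulHom V a * Ω.smulHom V b) = ∑ p ∈ antidiagonal k,
      ∑ q ∈ antidiagonal p.1, Ω.smulHom V (Ω q.1 a) * Ω.smulHom V (Ω q.2 b) * prepend p.2 := by
    calc prepend k * (Ω.smulHom V a * Ω.smulHom V b)
        = ∑ p ∈ antidiagonal k, Ω.smulHom V (Ω p.1 a) * (prepend p.2 * Ω.smulHom V b) := by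
          rw [← mul_assoc, prepend_mul_smulHom hk, Finset.sum_mul]
          simp only [mul_assoc]
      _ = ∑ p ∈ antidiagonal k, ∑ q ∈ antidiagonal p.2,
            Ω.smulHom V (Ω p.1 a) * Ω.smulHom V (Ω q.1 b) * prepend q.2 := by
          refine sum_congr rfl fun p hp => ?_
          rw [HasAntidiagonal.mem_antidiagonal] at hp
          rw [prepend_mul_smulHom (by omega), Finset.mul_sum]
          simp only [mul_assoc]
      _ = _ := Finset.Nat.sum_antidiagonal_sum_antidiagonal
            (fun i j m => Ω.smulHom V (Ω i a) * Ω.smulHom V (Ω j b) * prepend m) k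
  simp only [mulDefect, mul_sub, hmul, hcomp, ← sum_sub_distrib, sub_mul]

theorem mulDefect_mul_consHom {k : ℕ} (hk : ¬(1 ≤ k ∧ k ≤ n)) (a b : A) :
    Ω.mulDefect V a b * consHom k = consHom k * Ω.mulDefect V a b := by
  rw [mulDefect, sub_mul, mul_sub, smulHom_mul_consHom hk, mul_assoc, smulHom_mul_consHom hk,
    ← mul_assoc, smulHom_mul_consHom hk, mul_assoc]

theorem mulDefect_prepend_single {w : List ℕ}
    (hw : ∀ x a b, Ω.mulDefect V a b (Finsupp.single w x) = 0) :
    ∀ k ≤ n, ∀ x a b, Ω.mulDefect V a b (prepend k (Finsupp.single w x)) = 0 := by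
  intro k
  induction k using Nat.strong_induction_on with
  | _ k ih =>
    intro hk x a b
    have h := congrArg (· (Finsupp.single w x)) (prepend_mul_mulDefect (Ω := Ω) (V := V) hk a b)
    simp only [AddMonoid.End.coe_mul, Function.comp_apply, hw, map_zero,
      AddMonoid.End.finsetSum_apply] at h
    -- every term but the one at `(0, k)` involves a strictly shorter prefix `prepend p.2`
    rw [Finset.Nat.sum_antidiagonal_eq_apply_zero_left] at h
    · simpa [Ω.toFun_zero] using h.symm
    · intro p hp hp1
      rw [HasAntidiagonal.mem_antidiagonal] at hp
      exact sum_eq_zero fun q _ => ih p.2 (by omega) (by omega) x _ _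

theorem smulHom_mul (a b : A) : Ω.smulHom V (a * b) = Ω.smulHom V a * Ω.smulHom V b := by
  rw [← sub_eq_zero]
  suffices h : ∀ w x a b, Ω.mulDefect V a b (Finsupp.single w x) = 0 from
    Finsupp.addMonoidEnd_ext fun w x => h w x a b
  intro w
  induction w with
  | nil =>
    intro x a b
    simp [mulDefect, AddMonoid.End.sub_apply, smulHom_single, wordSMul, mul_smul]
  | cons k w ih =>
    intro x a b
    by_cases hk : 1 ≤ k ∧ k ≤ n
    · simpa [prepend_single, show k ≠ 0 by omega] using mulDefect_prepend_single ih k hk.2 x a b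
    · have h := congrArg (· (Finsupp.single w x)) (mulDefect_mul_consHom (Ω := Ω) (V := V) hk a b)
      simpa only [AddMonoid.End.coe_mul, Function.comp_apply, consHom_single, ih, map_zero]
        using h

theorem smulHom_one : Ω.smulHom V 1 = 1 := by
  refine Finsupp.addMonoidEnd_ext fun w x => ?_
  induction w generalizing x with
  | nil => simp [smulHom_single, wordSMul]
  | cons k w ih =>
    by_cases hk : 1 ≤ k ∧ k ≤ n
    · have hcomm : prepend k * Ω.smulHom V 1 = Ω.smulHom V 1 * prepend k := by
        rw [prepend_mul_smulHom hk.2, Finset.Nat.sum_antidiagonal_eq_apply_zero_left,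
          Ω.toFun_zero]
        · rfl
        · intro p hp hp1
          rw [HasAntidiagonal.mem_antidiagonal] at hp
          simp [Ω.map_one_eq_zero (Nat.one_le_iff_ne_zero.2 hp1) (by omega)]
      have h := congrArg (· (Finsupp.single w x)) hcomm
      simp only [AddMonoid.End.coe_mul, Function.comp_apply, ih, AddMonoid.End.coe_one, id_eq,
        prepend_single, show k ≠ 0 by omega, if_false] at h
      simpa using h.symm
    · have h := congrArg (· (Finsupp.single w x)) (smulHom_mul_consHom (Ω := Ω) (V := V) hk 1)
      simp only [AddMonoid.End.coe_mul, Function.comp_apply, ih, AddMonoid.End.coe_one, id_eq,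
        consHom_single] at h
      simpa using h

noncomputable instance : Module A (Ω.InducedModule V) where
  smul a f := Ω.smulHom V a f
  one_smul f := congrArg (· f) smulHom_one
  mul_smul a b f := congrArg (· f) (smulHom_mul a b)
  smul_zero a := map_zero (Ω.smulHom V a)
  smul_add a := map_add (Ω.smulHom V a)
  add_smul a b f := congrArg (· f) (map_add (Ω.smulHom V) a b)
  zero_smul f := congrArg (· f) (map_zero (Ω.smulHom V))

theorem smul_toInducedModule (a : A) (f : List ℕ →₀ V) :
    a • Ω.toInducedModule f = Ω.toInducedModule (Ω.smulHom V a f) :=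
  rfl

theorem shift_smul {k : ℕ} (hk : k ≤ n) (a : A) (f : Ω.InducedModule V) :
    Ω.shift k (a • f) = ∑ p ∈ antidiagonal k, Ω p.1 a • Ω.shift p.2 f :=
  (congrArg (· f) (prepend_mul_smulHom hk a)).trans (AddMonoid.End.finsetSum_apply _ _ f)

theorem annIdeal_toInducedModule_single_nil (L : Submodule A A) :
    annIdeal A (Ω.toInducedModule (Finsupp.single [] (Submodule.Quotient.mk (p := L) 1))) = L := by
  ext a
  rw [annIdeal, LinearMap.mem_ker, LinearMap.toSpanSingleton_apply, smul_toInducedModule,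
    smulHom_single]
  simp [toInducedModule_eq_zero, wordSMul, ← Submodule.Quotient.mk_smul]

theorem invFamily_apply_mem_of_mem_annIdeal {L : Submodule A A} {k : ℕ} (hk : k ≤ n) {a : A}
    (ha : a ∈ annIdeal A
      (Ω.shift k (Ω.toInducedModule (Finsupp.single [] (Submodule.Quotient.mk (p := L) 1))))) :
    ∀ t ≤ k, invFamily Ω t a ∈ L := by
  have h : (Ω.smulHom (A ⧸ L) a * prepend k : AddMonoid.End (List ℕ →₀ A ⧸ L))
      (Finsupp.single [] (Submodule.Quotient.mk 1)) = 0 :=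
    ha
  rw [smulHom_mul_prepend hk, AddMonoid.End.finsetSum_apply] at h
  simp only [AddMonoid.End.coe_mul, Function.comp_apply, smulHom_single, wordSMul,
    prepend_single] at h
  intro t ht
  have h' := congrArg (fun f : List ℕ →₀ A ⧸ L => f (if k - t = 0 then [] else [k - t])) h
  simp only [Finsupp.finsetSum_apply, Finsupp.single_apply, Finsupp.coe_zero, Pi.zero_apply] at h'
  rw [sum_eq_single (t, k - t)] at h'
  · simpa [← Submodule.Quotient.mk_smul] using h'
  · intro p hp hne
    rw [HasAntidiagonal.mem_antidiagonal] at hp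
    rw [if_neg]
    split_ifs <;> simp [Prod.ext_iff] at hne ⊢ <;> omega
  · simp [HasAntidiagonal.mem_antidiagonal, ht]

end HigherDerivation

theorem stmt_16_general {A : Type u} [Ring A] (n : ℕ)
    (ℒ : Set (Submodule A A))
    (Ω : ℕ → A → A)
    (hΩadd : ∀ k a b, Ω k (a + b) = Ω k a + Ω k b)
    (hΩ0 : ∀ a, Ω 0 a = a)
    (hΩmul : ∀ k ≤ n, ∀ a b : A,
      Ω k (a * b) = ∑ i ∈ Finset.range (k + 1), Ω i a * Ω (k - i) b)
    (hdiff : ∀ (M : ModuleCat.{u} A) (Ψ : ℕ → M → M),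
      (∀ k m m', Ψ k (m + m') = Ψ k m + Ψ k m') →
      (∀ m, Ψ 0 m = m) →
      (∀ k ≤ n, ∀ (a : A) (m : M),
        Ψ k (a • m) = ∑ i ∈ Finset.range (k + 1), Ω i a • Ψ (k - i) m) →
      ∀ i ≤ n, ∀ m : M, annIdeal A m ∈ ℒ → annIdeal A (Ψ i m) ∈ ℒ) :
    ∀ I ∈ ℒ, ∃ K ∈ ℒ, ∀ j ≤ n, ∀ x ∈ K, Ω j x ∈ I := by
  let D : HigherDerivation A n :=
    { toFun := fun k => AddMonoidHom.mk' (Ω k) (hΩadd k)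
      toFun_zero := AddMonoidHom.ext hΩ0
      toFun_mul := fun k hk a b => (hΩmul k hk a b).trans
        (Finset.Nat.sum_antidiagonal_eq_sum_range_succ (fun i j => Ω i a * Ω j b) k).symm }
  intro I hI
  suffices ∀ r ≤ n, ∃ K ∈ ℒ, ∀ j ≤ r, ∀ x ∈ K, Ω j x ∈ I from this n le_rfl
  intro r hr
  induction r with
  | zero => exact ⟨I, hI, fun j hj x hx => by rwa [Nat.le_zero.1 hj, hΩ0]⟩
  | succ r ih =>
    obtain ⟨L, hL, hLI⟩ := ih (by omega)
    have hK := hdiff (ModuleCat.of A (D.InducedModule (A ⧸ L))) D.shift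
      D.shift_add D.shift_zero (fun k hk a m => (D.shift_smul hk a m).trans
        (Finset.Nat.sum_antidiagonal_eq_sum_range_succ (fun i j => Ω i a • D.shift j m) k))
      (r + 1) hr _ (by rwa [HigherDerivation.annIdeal_toInducedModule_single_nil])
    exact ⟨_, hK, fun j hj a ha => apply_mem_of_invFamily_mem D.toFun_zero
      (I := I.toAddSubgroup) hLI (HigherDerivation.invFamily_apply_mem_of_mem_annIdeal hr ha) j hj⟩

/-- If every higher `Ω`-derivation of order `n` on every `A`-module preserves the torsion
submodule of the hereditary torsion theory `τ` corresponding to the Gabriel filter `ℒ`, then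
`ℒ` is `Ω`-invariant of order `n`: for every `I ∈ ℒ` there is `K ∈ ℒ` with `Ω j (K) ⊆ I`
for all `j = 0, 1, …, n`. -/
theorem stmt_16 {A : Type u} [Ring A] (n : ℕ)
    (ℒ : Set (Submodule A A))
    (hIL : ∀ I : Submodule A A, I ∈ ℒ ↔
      ∀ x : A ⧸ I, annIdeal A x ∈ ℒ)
    (Ω : ℕ → A → A)
    (hΩadd : ∀ k a b, Ω k (a + b) = Ω k a + Ω k b)
    (hΩ0 : ∀ a, Ω 0 a = a)
    (hΩmul : ∀ k ≤ n, ∀ a b : A,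
      Ω k (a * b) = ∑ i ∈ Finset.range (k + 1), Ω i a * Ω (k - i) b)
    (hdiff : ∀ (M : ModuleCat.{u} A) (Ψ : ℕ → M → M),
      (∀ k m m', Ψ k (m + m') = Ψ k m + Ψ k m') →
      (∀ m, Ψ 0 m = m) →
      (∀ k ≤ n, ∀ (a : A) (m : M),
        Ψ k (a • m) = ∑ i ∈ Finset.range (k + 1), Ω i a • Ψ (k - i) m) →
      ∀ i ≤ n, ∀ m : M, annIdeal A m ∈ ℒ → annIdeal A (Ψ i m) ∈ ℒ) :
    ∀ I ∈ ℒ, ∃ K ∈ ℒ, ∀ j ≤ n, ∀ x ∈ K, Ω j x ∈ I :=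
  stmt_16_general n ℒ Ω hΩadd hΩ0 hΩmul hdiff
end

section
/- Let τ be a hereditary torsion theory on left A-modules such that every higher Ω-derivation D of order n on any A-module M extends to a higher Ω-derivation D̃ on Q_τ(M) satisfying D̃_i ∘ Φ_M = Φ_M ∘ D_i for all i. Then τ is higher differential of order n: D_i(τ(M)) ⊆ τ(M) for every M, every higher Ω-derivation D on M, and all 0 ≤ i ≤ n. -/
universe u

theorem apply_eq_zero_of_intertwined {M Q : Type*} [AddGroup Q] {Φ : M → Q} {D : M → M}
    {D' : Q → Q} (hD'add : ∀ q q', D' (q + q') = D' q + D' q')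
    (hcomm : ∀ m, D' (Φ m) = Φ (D m)) {m : M} (hm : Φ m = 0) : Φ (D m) = 0 := by
  rw [← hcomm, hm]
  exact map_zero (AddMonoidHom.mk' D' hD'add)

theorem stmt_18_general {A : Type u} [Ring A] (n : ℕ)
    (ℒ : Set (Submodule A A))
    (Ω : ℕ → A → A)
    (hext : ∀ (M : ModuleCat.{u} A) (D : ℕ → M → M),
      (∀ k m m', D k (m + m') = D k m + D k m') →
      (∀ m, D 0 m = m) →
      (∀ k ≤ n, ∀ (a : A) (m : M),
        D k (a • m) = ∑ i ∈ Finset.range (k + 1), Ω i a • D (k - i) m) →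
      ∃ (Q : ModuleCat.{u} A) (Φ : M →ₗ[A] Q) (D' : ℕ → Q → Q),
        (∀ m : M, Φ m = 0 ↔ annIdeal A m ∈ ℒ) ∧
        (∀ q : Q, annIdeal A q ∈ ℒ → q = 0) ∧
        (∀ q : Q,
          Submodule.comap (LinearMap.toSpanSingleton A Q q) (LinearMap.range Φ) ∈ ℒ) ∧
        (∀ k q q', D' k (q + q') = D' k q + D' k q') ∧
        (∀ q, D' 0 q = q) ∧
        (∀ k ≤ n, ∀ (a : A) (q : Q),
          D' k (a • q) = ∑ i ∈ Finset.range (k + 1), Ω i a • D' (k - i) q) ∧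
        (∀ i ≤ n, ∀ m : M, D' i (Φ m) = Φ (D i m))) :
    ∀ (M : ModuleCat.{u} A) (D : ℕ → M → M),
      (∀ k m m', D k (m + m') = D k m + D k m') →
      (∀ m, D 0 m = m) →
      (∀ k ≤ n, ∀ (a : A) (m : M),
        D k (a • m) = ∑ i ∈ Finset.range (k + 1), Ω i a • D (k - i) m) →
      ∀ i ≤ n, ∀ m : M, annIdeal A m ∈ ℒ → annIdeal A (D i m) ∈ ℒ := by
  intro M D hadd h0 hmul i hi m hm
  obtain ⟨Q, Φ, D', hker, -, -, hD'add, -, -, hcomm⟩ := hext M D hadd h0 hmul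
  -- `τ(M)`, the elements whose annihilator lies in the Gabriel filter `ℒ`, is `ker Φ`.
  exact (hker (D i m)).mp <|
    apply_eq_zero_of_intertwined (hD'add i) (hcomm i hi) ((hker m).mpr hm)

/-- If every higher `Ω`-derivation `D` of order `n` on any `A`-module `M` extends to a higher
`Ω`-derivation `D'` on the module of quotients `Q_τ(M)` (a τ-torsion-free module `Q` with a
map `Φ : M → Q` whose kernel is `τ(M)` and whose cokernel is τ-torsion) satisfying
`D' i ∘ Φ = Φ ∘ D i`, then `τ` is higher differential of order `n`:
`D i (τ(M)) ⊆ τ(M)` for every `M`, every higher `Ω`-derivation `D`, and all `0 ≤ i ≤ n`. -/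
theorem stmt_18 {A : Type u} [Ring A] (n : ℕ)
    (ℒ : Set (Submodule A A))
    (Ω : ℕ → A → A)
    (hΩadd : ∀ k a b, Ω k (a + b) = Ω k a + Ω k b)
    (hΩ0 : ∀ a, Ω 0 a = a)
    (hΩmul : ∀ k ≤ n, ∀ a b : A,
      Ω k (a * b) = ∑ i ∈ Finset.range (k + 1), Ω i a * Ω (k - i) b)
    (hext : ∀ (M : ModuleCat.{u} A) (D : ℕ → M → M),
      (∀ k m m', D k (m + m') = D k m + D k m') →
      (∀ m, D 0 m = m) →
      (∀ k ≤ n, ∀ (a : A) (m : M),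
        D k (a • m) = ∑ i ∈ Finset.range (k + 1), Ω i a • D (k - i) m) →
      ∃ (Q : ModuleCat.{u} A) (Φ : M →ₗ[A] Q) (D' : ℕ → Q → Q),
        (∀ m : M, Φ m = 0 ↔ annIdeal A m ∈ ℒ) ∧
        (∀ q : Q, annIdeal A q ∈ ℒ → q = 0) ∧
        (∀ q : Q,
          Submodule.comap (LinearMap.toSpanSingleton A Q q) (LinearMap.range Φ) ∈ ℒ) ∧
        (∀ k q q', D' k (q + q') = D' k q + D' k q') ∧
        (∀ q, D' 0 q = q) ∧
        (∀ k ≤ n, ∀ (a : A) (q : Q),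
          D' k (a • q) = ∑ i ∈ Finset.range (k + 1), Ω i a • D' (k - i) q) ∧
        (∀ i ≤ n, ∀ m : M, D' i (Φ m) = Φ (D i m))) :
    ∀ (M : ModuleCat.{u} A) (D : ℕ → M → M),
      (∀ k m m', D k (m + m') = D k m + D k m') →
      (∀ m, D 0 m = m) →
      (∀ k ≤ n, ∀ (a : A) (m : M),
        D k (a • m) = ∑ i ∈ Finset.range (k + 1), Ω i a • D (k - i) m) →
      ∀ i ≤ n, ∀ m : M, annIdeal A m ∈ ℒ → annIdeal A (D i m) ∈ ℒ :=
  stmt_18_general n ℒ Ω hext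
end
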